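/- Let g ∈ GL(2,ℂ) be the matrix [[√2, i],[i, −√2]], and consider the 2×2 complex matrices Matrix 2 2 ℂ as an algebra over ℝ. Then the ℝ-subalgebra of Matrix 2 2 ℂ generated by g together with the set { [[0, a],[−a, 0]] : a ∈ ℂ } is all of Matrix 2 2 ℂ. -/
import Mathlib


open Matrix

/-- The complex matrix `g = φ(G) = [[√2, i], [i, -√2]]`. -/
noncomputable def gC : Matrix (Fin 2) (Fin 2) ℂ :=
  !![(Real.sqrt 2 : ℂ), Complex.I;
     Complex.I, -(Real.sqrt 2 : ℂ)]

/-- **Lemma 3.7.** The `ℝ`-subalgebra of the `2 × 2` complex matrices generated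
by `g` together with `so(2, ℂ) = { [[0, a], [-a, 0]] : a ∈ ℂ }` is all of
`gl(2, ℂ)`. -/
theorem adjoin_g_so2C_eq_top :
    Algebra.adjoin ℝ
      (insert gC {m : Matrix (Fin 2) (Fin 2) ℂ | ∃ a : ℂ, m = !![0, a; -a, 0]}) = ⊤ := by
  set A := Algebra.adjoin ℝ
      (insert gC {m : Matrix (Fin 2) (Fin 2) ℂ | ∃ a : ℂ, m = !![0, a; -a, 0]}) with hA
  have hg : gC ∈ A := Algebra.subset_adjoin (Set.mem_insert _ _)
  have hJ : ∀ a : ℂ, !![0, a; -a, 0] ∈ A := fun a =>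
    Algebra.subset_adjoin (Set.mem_insert_of_mem _ ⟨a, rfl⟩)
  have h2 : ((Real.sqrt 2 : ℝ) : ℂ) * ((Real.sqrt 2 : ℝ) : ℂ) = 2 := by
    norm_cast
    exact Real.mul_self_sqrt (by norm_num)
  have hscal : ∀ c : ℂ, c • (1 : Matrix (Fin 2) (Fin 2) ℂ) ∈ A := by
    intro c
    have h : (c • 1 : Matrix (Fin 2) (Fin 2) ℂ) = !![0, 1; -1, 0] * !![0, -c; c, 0] := by
      ext i j
      fin_cases i <;> fin_cases j <;>
        simp [Matrix.mul_apply, Fin.sum_univ_two, Matrix.one_apply]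
    rw [h]
    refine A.mul_mem (hJ 1) ?_
    have := hJ (-c)
    simpa using this
  have hsmul : ∀ (c : ℂ) {x : Matrix (Fin 2) (Fin 2) ℂ}, x ∈ A → c • x ∈ A := by
    intro c x hx
    have h : c • x = (c • 1) * x := by rw [smul_mul_assoc, one_mul]
    rw [h]
    exact A.mul_mem (hscal c) hx
  -- D = diag(1, -1)
  have hJg : !![(0:ℂ), 1; -1, 0] * gC ∈ A := A.mul_mem (hJ 1) hg
  have hD : !![(1:ℂ), 0; 0, -1] ∈ A := by
    have h : !![(1:ℂ), 0; 0, -1] =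
        ((Real.sqrt 2 : ℝ) : ℂ) • gC + Complex.I • (!![(0:ℂ), 1; -1, 0] * gC) := by
      ext i j
      fin_cases i <;> fin_cases j <;>
        simp [gC, Matrix.mul_apply, Fin.sum_univ_two, h2, Complex.I_mul_I] <;> ring_nf <;>
        simp [Complex.I_sq, h2] <;> ring_nf
      all_goals simp [Complex.ext_iff]
    rw [h]
    exact A.add_mem (hsmul _ hg) (hsmul _ hJg)
  -- S = E01 + E10
  have hS : !![(0:ℂ), 1; 1, 0] ∈ A := by
    have h : !![(0:ℂ), 1; 1, 0] =
        (-Complex.I) • (gC - ((Real.sqrt 2 : ℝ) : ℂ) • !![(1:ℂ), 0; 0, -1]) := by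
      ext i j
      fin_cases i <;> fin_cases j <;>
        simp [gC, Complex.I_mul_I] <;> ring_nf <;> simp [Complex.ext_iff]
    rw [h]
    exact hsmul _ (A.sub_mem hg (hsmul _ hD))
  have hE00 : !![(1:ℂ), 0; 0, 0] ∈ A := by
    have h : !![(1:ℂ), 0; 0, 0] = ((1:ℂ)/2) • ((1 : Matrix (Fin 2) (Fin 2) ℂ) + !![(1:ℂ), 0; 0, -1]) := by
      ext i j; fin_cases i <;> fin_cases j <;> simp [Matrix.one_apply] <;> norm_num
    rw [h]; exact hsmul _ (A.add_mem A.one_mem hD)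
  have hE11 : !![(0:ℂ), 0; 0, 1] ∈ A := by
    have h : !![(0:ℂ), 0; 0, 1] = ((1:ℂ)/2) • ((1 : Matrix (Fin 2) (Fin 2) ℂ) - !![(1:ℂ), 0; 0, -1]) := by
      ext i j; fin_cases i <;> fin_cases j <;> simp [Matrix.one_apply] <;> norm_num
    rw [h]; exact hsmul _ (A.sub_mem A.one_mem hD)
  have hE01 : !![(0:ℂ), 1; 0, 0] ∈ A := by
    have h : !![(0:ℂ), 1; 0, 0] = ((1:ℂ)/2) • (!![(0:ℂ), 1; 1, 0] + !![(0:ℂ), 1; -1, 0]) := by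
      ext i j; fin_cases i <;> fin_cases j <;> simp <;> norm_num
    rw [h]; exact hsmul _ (A.add_mem hS (hJ 1))
  have hE10 : !![(0:ℂ), 0; 1, 0] ∈ A := by
    have h : !![(0:ℂ), 0; 1, 0] = ((1:ℂ)/2) • (!![(0:ℂ), 1; 1, 0] - !![(0:ℂ), 1; -1, 0]) := by
      ext i j; fin_cases i <;> fin_cases j <;> simp <;> norm_num
    rw [h]; exact hsmul _ (A.sub_mem hS (hJ 1))
  rw [eq_top_iff]
  rintro m -
  have hm : m = (m 0 0) • !![(1:ℂ), 0; 0, 0] + (m 0 1) • !![(0:ℂ), 1; 0, 0] +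
      (m 1 0) • !![(0:ℂ), 0; 1, 0] + (m 1 1) • !![(0:ℂ), 0; 0, 1] := by
    ext i j; fin_cases i <;> fin_cases j <;> simp
  rw [hm]
  exact A.add_mem (A.add_mem (A.add_mem (hsmul _ hE00) (hsmul _ hE01)) (hsmul _ hE10))
    (hsmul _ hE11)
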